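/- In the Braess' problem with an even number N₀ ≥ 2 of agents and R₀ = 1.25·N₀, the fully defecting profile (all agents take Start-A-B-End, each receiving -2·N₀) is a strict Nash equilibrium: if a single odd agent unilaterally switches to cooperation (path Start-A-End), then n_{Start-A} is still N₀ and the deviator's reward becomes -(N₀ + 1.25·N₀) = -2.25·N₀ < -2·N₀; symmetrically, a single even agent switching to cooperation (path Start-B-End) receives -(1.25·N₀ + N₀) = -2.25·N₀ < -2·N₀. Hence selfish agents are locked in the full-defection outcome even though full cooperation gives every agent a strictly higher reward (-1.75·N₀ > -2·N₀). -/
import Mathlib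


/-- An agent's choice in the Braess' problem: cooperate (take its designated
original path) or defect (take the bridge path Start-A-B-End). -/
inductive Choice : Type
  | coop : Choice
  | defect : Choice
deriving DecidableEq

/-- Number of agents traversing segment Start-A: every defector, and every
cooperating odd-ID agent (who takes Start-A-End). -/
def nSA (N : ℕ) (p : Fin N → Choice) : ℕ :=
  (Finset.univ.filter
    (fun i : Fin N => p i = Choice.defect ∨ (p i = Choice.coop ∧ Odd i.val))).card

/-- Number of agents traversing segment B-End: every defector, and every
cooperating even-ID agent (who takes Start-B-End). -/
def nBE (N : ℕ) (p : Fin N → Choice) : ℕ :=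
  (Finset.univ.filter
    (fun i : Fin N => p i = Choice.defect ∨ (p i = Choice.coop ∧ Even i.val))).card

/-- The base reward `R₀ = 2.5·N₀/2 = 1.25·N₀`. -/
noncomputable def R0 (N : ℕ) : ℝ := 1.25 * N

/-- Reward of agent `i` under profile `p`: a defector gets
`-(n_{Start-A} + n_{B-End})`, a cooperating odd agent gets
`-(n_{Start-A} + R₀)`, and a cooperating even agent gets `-(R₀ + n_{B-End})`. -/
noncomputable def braessReward (N : ℕ) (p : Fin N → Choice) (i : Fin N) : ℝ :=
  if p i = Choice.defect then -((nSA N p : ℝ) + (nBE N p : ℝ))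
  else if Odd i.val then -((nSA N p : ℝ) + R0 N)
  else -(R0 N + (nBE N p : ℝ))

/-- A profile `p` is a strict Nash equilibrium if every unilateral deviation
strictly decreases the deviator's reward. -/
def IsStrictNash (N : ℕ) (p : Fin N → Choice) : Prop :=
  ∀ i : Fin N, ∀ q : Fin N → Choice,
    (∀ j : Fin N, j ≠ i → q j = p j) → q i ≠ p i →
      braessReward N q i < braessReward N p i

lemma card_odd_range (m : ℕ) :
    ((Finset.range (2 * m)).filter (fun n => Odd n)).card = m := by
  induction m with
  | zero => simp
  | succ k ih =>
    have : 2 * (k + 1) = (2 * k + 1) + 1 := by ring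
    rw [this, Finset.range_add_one, Finset.filter_insert, Finset.range_add_one,
      Finset.filter_insert]
    have h1 : Odd (2 * k + 1) := ⟨k, by ring⟩
    have h2 : ¬ Odd (2 * k) := by simp [Nat.not_odd_iff_even, even_two_mul]
    simp [h1, h2, ih, Finset.card_insert_of_notMem, Finset.mem_filter]

lemma card_even_range (m : ℕ) :
    ((Finset.range (2 * m)).filter (fun n => Even n)).card = m := by
  induction m with
  | zero => simp
  | succ k ih =>
    have : 2 * (k + 1) = (2 * k + 1) + 1 := by ring
    rw [this, Finset.range_add_one, Finset.filter_insert, Finset.range_add_one,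
      Finset.filter_insert]
    have h1 : ¬ Even (2 * k + 1) := by simp [Nat.not_even_iff_odd]
    have h2 : Even (2 * k) := even_two_mul k
    simp [h1, h2, ih, Finset.card_insert_of_notMem, Finset.mem_filter]

lemma fin_filter_card (N : ℕ) (P : ℕ → Prop) [DecidablePred P] :
    (Finset.univ.filter (fun i : Fin N => P i.val)).card
      = ((Finset.range N).filter P).card := by
  rw [Finset.card_filter, Finset.card_filter]
  exact Fin.sum_univ_eq_sum_range (fun n => if P n then 1 else 0) N

lemma nSA_defect (N : ℕ) : nSA N (fun _ => Choice.defect) = N := by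
  simp [nSA]

lemma nBE_defect (N : ℕ) : nBE N (fun _ => Choice.defect) = N := by
  simp [nBE]

lemma nSA_coop (N : ℕ) :
    nSA N (fun _ => Choice.coop) = ((Finset.range N).filter (fun n => Odd n)).card := by
  rw [nSA, ← fin_filter_card N (fun n => Odd n)]
  congr 1
  ext i; simp

lemma nBE_coop (N : ℕ) :
    nBE N (fun _ => Choice.coop) = ((Finset.range N).filter (fun n => Even n)).card := by
  rw [nBE, ← fin_filter_card N (fun n => Even n)]
  congr 1
  ext i; simp

lemma nSA_dev_odd (N : ℕ) (i₀ : Fin N) (h : Odd i₀.val) :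
    nSA N (fun j => if j = i₀ then Choice.coop else Choice.defect) = N := by
  rw [nSA]
  have : (Finset.univ.filter (fun i : Fin N =>
      (if i = i₀ then Choice.coop else Choice.defect) = Choice.defect ∨
      ((if i = i₀ then Choice.coop else Choice.defect) = Choice.coop ∧ Odd i.val)))
      = Finset.univ := by
    ext i
    by_cases hi : i = i₀ <;> simp [hi, h]
  rw [this, Finset.card_univ, Fintype.card_fin]

lemma nBE_dev_even (N : ℕ) (i₀ : Fin N) (h : Even i₀.val) :
    nBE N (fun j => if j = i₀ then Choice.coop else Choice.defect) = N := by
  rw [nBE]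
  have : (Finset.univ.filter (fun i : Fin N =>
      (if i = i₀ then Choice.coop else Choice.defect) = Choice.defect ∨
      ((if i = i₀ then Choice.coop else Choice.defect) = Choice.coop ∧ Even i.val)))
      = Finset.univ := by
    ext i
    by_cases hi : i = i₀ <;> simp [hi, h]
  rw [this, Finset.card_univ, Fintype.card_fin]

/-- In the Braess' problem with an even number `N₀ ≥ 2` of agents, the fully
defecting profile is a strict Nash equilibrium: every agent gets `-2·N₀` there,
and any single agent unilaterally switching to cooperation gets
`-2.25·N₀ < -2·N₀`; yet full cooperation gives every agent `-1.75·N₀ > -2·N₀`. -/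
theorem braess_full_defection_strict_nash
    (N₀ : ℕ) (hEven : Even N₀) (hN : 2 ≤ N₀) :
    IsStrictNash N₀ (fun _ => Choice.defect) ∧
    (∀ i : Fin N₀, braessReward N₀ (fun _ => Choice.defect) i = -2 * N₀) ∧
    (∀ i₀ : Fin N₀,
      braessReward N₀ (fun j => if j = i₀ then Choice.coop else Choice.defect) i₀
        = -2.25 * N₀) ∧
    (∀ i : Fin N₀, braessReward N₀ (fun _ => Choice.coop) i = -1.75 * N₀) ∧
    (-1.75 * (N₀ : ℝ) > -2 * N₀) := by
  have hN0 : (0:ℝ) < N₀ := by exact_mod_cast lt_of_lt_of_le (by norm_num) hN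
  have hdef : ∀ i : Fin N₀, braessReward N₀ (fun _ => Choice.defect) i = -2 * N₀ := by
    intro i
    simp [braessReward, nSA_defect, nBE_defect]
    ring
  have hdev : ∀ i₀ : Fin N₀,
      braessReward N₀ (fun j => if j = i₀ then Choice.coop else Choice.defect) i₀
        = -2.25 * N₀ := by
    intro i₀
    rcases Nat.even_or_odd i₀.val with ho | ho
    · have hno : ¬ Odd i₀.val := by simpa [Nat.not_odd_iff_even] using ho
      simp [braessReward, nBE_dev_even N₀ i₀ ho, hno, R0]
      ring
    · have : Odd i₀.val := ho
      simp [braessReward, nSA_dev_odd N₀ i₀ ho, this, R0]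
      ring
  refine ⟨?_, hdef, hdev, ?_, by nlinarith⟩
  · intro i q hq hqi
    have hqi' : q i = Choice.coop := by
      cases h : q i with
      | coop => rfl
      | defect => exact absurd h hqi
    have hqeq : q = (fun j => if j = i then Choice.coop else Choice.defect) := by
      funext j
      by_cases hj : j = i
      · subst hj; simp [hqi']
      · simp [hj, hq j hj]
    rw [hqeq, hdef i, hdev i]
    nlinarith
  · intro i
    obtain ⟨m, hm⟩ := hEven
    have hmN : N₀ = 2 * m := by omega
    have hSA : (nSA N₀ (fun _ => Choice.coop) : ℝ) = N₀ / 2 := by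
      rw [nSA_coop N₀]
      rw [hmN]; push_cast [card_odd_range m]; ring
    have hBE : (nBE N₀ (fun _ => Choice.coop) : ℝ) = N₀ / 2 := by
      rw [nBE_coop N₀]
      rw [hmN]; push_cast [card_even_range m]; ring
    rcases Nat.even_or_odd i.val with ho | ho
    · have hno : ¬ Odd i.val := by simpa [Nat.not_odd_iff_even] using ho
      simp [braessReward, hno, hBE, R0]
      ring
    · simp [braessReward, ho, hSA, R0]
      ring
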